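/- Let 0 < ε < 1 and define m_k = (-1)^k · k^{-ε} for k ≥ 1 (and m_0 = 0). Then the quantity sup_n ( ∑_{k=n}^{2n} |(k+1)·(m_k - m_{k+1})|^q / (k+1) )^{1/q} is infinite for every q ≥ 1; that is, the sums ∑_{k=n}^{2n} (k+1)^{q-1} |m_k - m_{k+1}|^q are unbounded in n. -/

import Mathlib

/-! Since consecutive terms have opposite signs, `|m k - m (k + 1)| ≥ (k + 1) ^ (-ε)`, so the
`k`-th summand is at least `(k + 1) ^ (q * (1 - ε)) / (k + 1)`. On the block `n ≤ k ≤ 2 n` these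
`n + 1` terms add up to at least `(n + 1) ^ (q * (1 - ε)) / 2`, which tends to infinity because
`ε < 1`. -/

open Filter Finset

lemma abs_neg_one_pow_mul_sub_succ {a b : ℝ} (ha : 0 ≤ a) (hb : 0 ≤ b) (k : ℕ) :
    |(-1) ^ k * a - (-1) ^ (k + 1) * b| = a + b := by
  rw [pow_succ, mul_neg_one, neg_mul, sub_neg_eq_add, ← mul_add, abs_mul, abs_neg_one_pow,
    one_mul, abs_of_nonneg (add_nonneg ha hb)]

lemma rpow_mul_one_sub_div_self_le {x y ε q : ℝ} (hx : 0 < x) (hq : 0 ≤ q)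
    (hy : x ^ (-ε) ≤ y) : x ^ (q * (1 - ε)) / x ≤ x ^ (q - 1) * y ^ q := by
  have hsplit : x ^ (q * (1 - ε)) / x = x ^ (q - 1) * (x ^ (-ε)) ^ q := by
    rw [← Real.rpow_sub_one hx.ne', ← Real.rpow_mul hx.le, ← Real.rpow_add hx]
    ring_nf
  rw [hsplit]
  gcongr

lemma half_rpow_le_sum_Icc_rpow_div_self {b : ℝ} (hb : 0 ≤ b) (n : ℕ) :
    ((n : ℝ) + 1) ^ b / 2 ≤ ∑ k ∈ Icc n (2 * n), ((k : ℝ) + 1) ^ b / ((k : ℝ) + 1) := by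
  have hterm : ∀ k ∈ Icc n (2 * n),
      ((n : ℝ) + 1) ^ b / (2 * ((n : ℝ) + 1)) ≤ ((k : ℝ) + 1) ^ b / ((k : ℝ) + 1) := by
    intro k hk
    obtain ⟨hnk, hk2n⟩ := mem_Icc.mp hk
    have hnk' : (n : ℝ) ≤ k := by exact_mod_cast hnk
    have hk2n' : (k : ℝ) ≤ 2 * n := by exact_mod_cast hk2n
    gcongr
    linarith
  calc ((n : ℝ) + 1) ^ b / 2
      = #(Icc n (2 * n)) • (((n : ℝ) + 1) ^ b / (2 * ((n : ℝ) + 1))) := by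
        rw [Nat.card_Icc, nsmul_eq_mul, show 2 * n + 1 - n = n + 1 by omega]
        push_cast
        field_simp
    _ ≤ _ := card_nsmul_le_sum _ _ _ hterm

theorem alternating_seq_unbounded_sums_general (ε : ℝ) (hε1 : ε < 1)
    (m : ℕ → ℝ)
    (hm : ∀ k : ℕ, 1 ≤ k → m k = (-1 : ℝ) ^ k * (k : ℝ) ^ (-ε)) :
    ∀ q : ℝ, 1 ≤ q → ∀ C : ℝ, ∃ n : ℕ,
      C < ∑ k ∈ Finset.Icc n (2 * n), ((k : ℝ) + 1) ^ (q - 1) * |m k - m (k + 1)| ^ q := by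
  intro q hq C
  have hb : 0 < q * (1 - ε) := mul_pos (by linarith) (by linarith)
  have hgrow : Tendsto (fun n : ℕ => ((n : ℝ) + 1) ^ (q * (1 - ε))) atTop atTop :=
    (tendsto_rpow_atTop hb).comp (tendsto_atTop_add_const_right _ 1 tendsto_natCast_atTop_atTop)
  obtain ⟨n, hnC, hn⟩ := ((hgrow.eventually_gt_atTop (2 * C)).and (eventually_ge_atTop 1)).exists
  refine ⟨n, ?_⟩
  calc C < ((n : ℝ) + 1) ^ (q * (1 - ε)) / 2 := by linarith
    _ ≤ _ := half_rpow_le_sum_Icc_rpow_div_self hb.le n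
    _ ≤ _ := sum_le_sum fun k hk => ?_
  have hk : 1 ≤ k := hn.trans (mem_Icc.mp hk).1
  refine rpow_mul_one_sub_div_self_le (by positivity) (by linarith) ?_
  rw [hm k hk, hm (k + 1) (by omega), Nat.cast_succ,
    abs_neg_one_pow_mul_sub_succ (by positivity) (by positivity)]
  linarith [Real.rpow_nonneg k.cast_nonneg (-ε)]

theorem alternating_seq_unbounded_sums (ε : ℝ) (hε0 : 0 < ε) (hε1 : ε < 1)
    (m : ℕ → ℝ) (hm0 : m 0 = 0)
    (hm : ∀ k : ℕ, 1 ≤ k → m k = (-1 : ℝ) ^ k * (k : ℝ) ^ (-ε)) :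
    ∀ q : ℝ, 1 ≤ q → ∀ C : ℝ, ∃ n : ℕ,
      C < ∑ k ∈ Finset.Icc n (2 * n), ((k : ℝ) + 1) ^ (q - 1) * |m k - m (k + 1)| ^ q :=
  alternating_seq_unbounded_sums_general ε hε1 m hm
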